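/- arXiv:2503.04045 — 5 statements merged into one kernel-verified Lean document; each statement's English description precedes it below -/
import Mathlib

section
/- For every N ≥ 3, the number of distinct prime factors ω(N) satisfies ω(N) ≤ 1.3841 · (log N) / (log log N). -/
/-!
Let `P_k` be the product of the first `k` primes, so that `P_ω(N) ≤ N`. As `x ↦ x / log x`
increases on `[e, ∞)`, it suffices to find `e ≤ L ≤ log P_k` with `k log L ≤ 1.3841 L`.
For `k ≥ 13` take `L = k log k`: `k^k ≤ P_k` because the `k`-th prime is at least `3(k + 1)`
while `(1 + 1/k)^k < 3`, and `log log k ≤ log k / e` with `1 + 1/e < 1.3841`. For `k ≤ 3` the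
bound follows from `e log x ≤ x`. For `4 ≤ k ≤ 12`, where the constant is nearly attained
(at `k = 9`), `L` is a rational multiple of `log 2` and the inequalities are checked in integers.
-/

open Finset Real

noncomputable def firstPrimesProd (k : ℕ) : ℕ := ∏ i ∈ range k, Nat.nth Nat.Prime i

theorem firstPrimesProd_pos (k : ℕ) : 0 < firstPrimesProd k :=
  prod_pos fun i _ ↦ (Nat.prime_nth_prime i).pos

theorem firstPrimesProd_succ (k : ℕ) :
    firstPrimesProd (k + 1) = firstPrimesProd k * Nat.nth Nat.Prime k :=
  prod_range_succ _ _

theorem firstPrimesProd_count_eq_prod_primesBelow (n : ℕ) :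
    firstPrimesProd (Nat.count Nat.Prime n) = ∏ p ∈ n.primesBelow, p := by
  induction n with
  | zero => simp [firstPrimesProd]
  | succ n ih =>
    rw [Nat.count_succ, Nat.primesBelow_succ]
    split_ifs with hn
    · rw [firstPrimesProd_succ, ih, Nat.nth_count hn, prod_insert (Nat.notMem_primesBelow n),
        mul_comm]
    · simpa using ih

theorem firstPrimesProd_card_le_prod {S : Finset ℕ} (hS : ∀ p ∈ S, p.Prime) :
    firstPrimesProd S.card ≤ ∏ p ∈ S, p := by
  induction S using Finset.induction_on_max with
  | empty => simp [firstPrimesProd]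
  | insert a s ha ih =>
    have has : a ∉ s := fun h ↦ (ha a h).false
    have hs : ∀ p ∈ s, p.Prime := fun p hp ↦ hS p (mem_insert_of_mem hp)
    have hcount : s.card ≤ Nat.count Nat.Prime a := by
      rw [Nat.count_eq_card_filter_range]
      exact card_le_card fun p hp ↦ mem_filter.2 ⟨mem_range.2 (ha p hp), hs p hp⟩
    have hnth : Nat.nth Nat.Prime s.card ≤ a :=
      ((Nat.nth_le_nth Nat.infinite_setOfPred_prime).2 hcount).trans
        (Nat.nth_count (hS a (mem_insert_self a s))).le
    rw [card_insert_of_notMem has, prod_insert has, firstPrimesProd_succ, mul_comm a]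
    exact Nat.mul_le_mul (ih hs) hnth

theorem firstPrimesProd_card_primeFactors_le {N : ℕ} (hN : N ≠ 0) :
    firstPrimesProd N.primeFactors.card ≤ N :=
  (firstPrimesProd_card_le_prod fun _ ↦ Nat.prime_of_mem_primeFactors).trans
    (Nat.le_of_dvd (Nat.pos_of_ne_zero hN) (Nat.prod_primeFactors_dvd N))

theorem Nat.Prime.mod_six_eq_one_or_five {p : ℕ} (hp : p.Prime) (h5 : 5 ≤ p) :
    p % 6 = 1 ∨ p % 6 = 5 := by
  have := hp.eq_one_or_self_of_dvd 2
  have := hp.eq_one_or_self_of_dvd 3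
  omega

theorem nth_prime_add_six_le {j : ℕ} (hj : 2 ≤ j) :
    Nat.nth Nat.Prime j + 6 ≤ Nat.nth Nat.Prime (j + 2) := by
  have hmono := Nat.nth_strictMono Nat.infinite_setOfPred_prime
  have h5 : 5 ≤ Nat.nth Nat.Prime j := Nat.nth_prime_two_eq_five ▸ hmono.monotone hj
  have : Nat.nth Nat.Prime j < Nat.nth Nat.Prime (j + 1) := hmono (lt_add_one j)
  have : Nat.nth Nat.Prime (j + 1) < Nat.nth Nat.Prime (j + 2) := hmono (lt_add_one (j + 1))
  have := (Nat.prime_nth_prime j).mod_six_eq_one_or_five h5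
  have := (Nat.prime_nth_prime (j + 1)).mod_six_eq_one_or_five (by omega)
  have := (Nat.prime_nth_prime (j + 2)).mod_six_eq_one_or_five (by omega)
  omega

theorem three_mul_add_one_le_nth_prime {k : ℕ} (hk : 11 ≤ k) :
    3 * (k + 1) ≤ Nat.nth Nat.Prime k := by
  obtain ⟨j, rfl⟩ := Nat.exists_eq_add_of_le' hk
  induction j using Nat.twoStepInduction with
  | zero =>
    have h : Nat.nth Nat.Prime 11 = 37 := Nat.nth_count (show Nat.Prime 37 by norm_num)
    simp [h]
  | one =>
    have h : Nat.nth Nat.Prime 12 = 41 := Nat.nth_count (show Nat.Prime 41 by norm_num)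
    simp [h]
  | more j ih _ =>
    have := nth_prime_add_six_le (j := j + 11) (by omega)
    have := ih (by omega)
    rw [show j + 2 + 11 = j + 11 + 2 by ring]
    omega

theorem add_one_pow_le_three_mul_pow (k : ℕ) : (k + 1) ^ k ≤ 3 * k ^ k := by
  rcases k.eq_zero_or_pos with rfl | hk
  · norm_num
  have hk' : (0 : ℝ) < k := by exact_mod_cast hk
  have hsplit : ((k : ℝ) + 1) ^ k = (1 + (k : ℝ)⁻¹) ^ k * (k : ℝ) ^ k := by
    rw [← mul_pow, add_mul, inv_mul_cancel₀ hk'.ne', one_mul, add_comm]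
  have := one_add_inv_pow_le_exp (n := k)
  have := exp_one_lt_d9
  have : ((k : ℝ) + 1) ^ k ≤ 3 * (k : ℝ) ^ k := by
    rw [hsplit]; nlinarith [pow_pos hk' k]
  exact_mod_cast this

theorem pow_self_le_firstPrimesProd {k : ℕ} (hk : 13 ≤ k) : k ^ k ≤ firstPrimesProd k := by
  induction k, hk using Nat.le_induction with
  | base =>
    have h13 : firstPrimesProd 13 = ∏ p ∈ Nat.primesBelow 43, p :=
      firstPrimesProd_count_eq_prod_primesBelow 43
    rw [h13]
    decide
  | succ k hk ih =>
    calc (k + 1) ^ (k + 1) = (k + 1) * (k + 1) ^ k := pow_succ' _ _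
      _ ≤ (k + 1) * (3 * k ^ k) := Nat.mul_le_mul_left _ (add_one_pow_le_three_mul_pow k)
      _ = 3 * (k + 1) * k ^ k := by ring
      _ ≤ Nat.nth Nat.Prime k * firstPrimesProd k :=
        Nat.mul_le_mul (three_mul_add_one_le_nth_prime (by omega)) ih
      _ = firstPrimesProd (k + 1) := by rw [firstPrimesProd_succ, mul_comm]

theorem exp_one_mul_log_le {x : ℝ} (hx : 0 ≤ x) : exp 1 * log x ≤ x := by
  rcases hx.eq_or_lt with rfl | hx
  · simp
  have := log_le_sub_one_of_pos (div_pos hx (exp_pos 1))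
  rw [log_div hx.ne' (exp_pos 1).ne', log_exp] at this
  rw [← le_div_iff₀' (exp_pos 1)]
  linarith

/-- The monotonicity of `x / log x` on `[exp 1, ∞)`. -/
theorem mul_log_le_mul_of_le {k c L x : ℝ} (hk : 0 ≤ k) (hL : exp 1 ≤ L) (hLx : L ≤ x)
    (h : k * log L ≤ c * L) : k * log x ≤ c * x := by
  have hL0 : 0 < L := (exp_pos 1).trans_le hL
  have hlogL : 1 ≤ log L := by rwa [le_log_iff_exp_le hL0]
  have hconc : log x ≤ log L + (x - L) / L := by
    have := log_le_sub_one_of_pos (div_pos (hL0.trans_le hLx) hL0)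
    rw [log_div (hL0.trans_le hLx).ne' hL0.ne'] at this
    rw [sub_div, div_self hL0.ne']
    linarith
  have hkL : k ≤ c * L := by nlinarith
  have hslope : k * ((x - L) / L) ≤ c * (x - L) := by
    rw [mul_div_assoc', div_le_iff₀ hL0]
    nlinarith [sub_nonneg.2 hLx]
  calc k * log x ≤ k * (log L + (x - L) / L) := mul_le_mul_of_nonneg_left hconc hk
    _ = k * log L + k * ((x - L) / L) := mul_add _ _ _
    _ ≤ c * L + c * (x - L) := add_le_add h hslope
    _ = c * x := by ring

theorem div_mul_log_two_le_log {a b : ℕ} {y : ℝ} (hb : 0 < b)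
    (h : (2 : ℝ) ^ a ≤ y ^ b) : a / b * log 2 ≤ log y := by
  have := log_le_log (by positivity) h
  rw [log_pow, log_pow] at this
  rw [div_mul_eq_mul_div, div_le_iff₀' (by exact_mod_cast hb)]
  exact this

theorem log_le_div_mul_log_two {m d : ℕ} {y : ℝ} (hd : 0 < d) (hy : 0 < y)
    (h : y ^ d ≤ (2 : ℝ) ^ m) : log y ≤ m / d * log 2 := by
  have := log_le_log (pow_pos hy d) h
  rw [log_pow, log_pow] at this
  rw [div_mul_eq_mul_div, le_div_iff₀' (by exact_mod_cast hd)]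
  exact this

/-- With `L = a / b * log 2` and `0.6931471803 < log 2 < 0.6931471808`, the conditions give
`exp 1 ≤ L ≤ log P_k` for `P_k` the product of the primes below `n`, `log L ≤ m / d * log 2`, and
`k * (m / d) ≤ 1.3841 * (a / b)`. -/
abbrev OmegaBoundCertificate (k n a b m d : ℕ) : Prop :=
  Nat.count Nat.Prime n = k ∧ 0 < b ∧ 0 < d ∧ 4 * b ≤ a ∧
  2 ^ a ≤ (∏ p ∈ n.primesBelow, p) ^ b ∧
  (6931471808 * a) ^ d ≤ 2 ^ m * (10 ^ 10 * b) ^ d ∧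
  10000 * k * m * b ≤ 13841 * a * d

theorem mul_log_le_of_certificate {k : ℕ} (n a b m d : ℕ) {x : ℝ}
    (hc : OmegaBoundCertificate k n a b m d) (hx : log (firstPrimesProd k) ≤ x) :
    k * log x ≤ 1.3841 * x := by
  obtain ⟨hn, hb, hd, ha, hP, hM, hkm⟩ := hc
  rw [← hn, firstPrimesProd_count_eq_prod_primesBelow] at hx
  have hb' : (0 : ℝ) < b := by exact_mod_cast hb
  have hd' : (0 : ℝ) < d := by exact_mod_cast hd
  have ha' : 4 * (b : ℝ) ≤ a := by exact_mod_cast ha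
  set L : ℝ := a / b * log 2 with hL
  have hLe : exp 1 ≤ L := by
    have : (4 : ℝ) ≤ a / b := by rwa [le_div_iff₀ hb']
    nlinarith [exp_one_lt_d9, log_two_gt_d9]
  have hL0 : 0 < L := (exp_pos 1).trans_le hLe
  have hLx : L ≤ x :=
    (div_mul_log_two_le_log hb (by exact_mod_cast hP)).trans hx
  have hlogL : log L ≤ m / d * log 2 := by
    have hLM : L ≤ a / b * 0.6931471808 := by
      rw [hL]; gcongr; exact log_two_lt_d9.le
    have hM' : ((a : ℝ) / b * 0.6931471808) ^ d ≤ 2 ^ m := by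
      have hM' : ((6931471808 * a : ℕ) : ℝ) ^ d ≤ 2 ^ m * ((10 ^ 10 * b : ℕ) : ℝ) ^ d := by
        exact_mod_cast hM
      rw [show (a : ℝ) / b * 0.6931471808 = ((6931471808 * a : ℕ) : ℝ) / ((10 ^ 10 * b : ℕ) : ℝ) by
        push_cast; field_simp; ring, div_pow, div_le_iff₀ (by positivity)]
      exact hM'
    exact (log_le_log hL0 hLM).trans (log_le_div_mul_log_two hd (hL0.trans_le hLM) hM')
  have hkm' : (k : ℝ) * (m / d) ≤ 1.3841 * (a / b) := by
    rw [mul_div_assoc', mul_div_assoc', div_le_div_iff₀ hd' hb']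
    have : ((10000 * k * m * b : ℕ) : ℝ) ≤ ((13841 * a * d : ℕ) : ℝ) := by exact_mod_cast hkm
    push_cast at this
    linarith
  refine mul_log_le_mul_of_le (Nat.cast_nonneg _) hLe hLx ?_
  calc (k : ℝ) * log L ≤ k * (m / d * log 2) :=
        mul_le_mul_of_nonneg_left hlogL (Nat.cast_nonneg _)
    _ = k * (m / d) * log 2 := by ring
    _ ≤ 1.3841 * (a / b) * log 2 := by gcongr
    _ = 1.3841 * L := by rw [hL]; ring

theorem mul_log_le_of_le_three {k : ℕ} {x : ℝ} (hk : k ≤ 3) (hx : 0 ≤ x) :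
    k * log x ≤ 1.3841 * x := by
  rcases le_total (log x) 0 with hlog | hlog
  · nlinarith [(Nat.cast_nonneg k : (0 : ℝ) ≤ k)]
  have hk' : (k : ℝ) ≤ 3 := by exact_mod_cast hk
  have := exp_one_mul_log_le hx
  have := exp_one_gt_d9
  nlinarith

theorem mul_log_le_of_thirteen_le {k : ℕ} {x : ℝ} (hk : 13 ≤ k)
    (hx : log (firstPrimesProd k) ≤ x) : k * log x ≤ 1.3841 * x := by
  have hk' : (13 : ℝ) ≤ k := by exact_mod_cast hk
  have hlogk : 1 ≤ log k := by
    rw [le_log_iff_exp_le (by linarith)]; linarith [exp_one_lt_d9]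
  have hL : (k : ℝ) * log k ≤ log (firstPrimesProd k) := by
    rw [← log_pow]
    exact log_le_log (by positivity) (by exact_mod_cast pow_self_le_firstPrimesProd hk)
  refine mul_log_le_mul_of_le (Nat.cast_nonneg k) ?_ (hL.trans hx) ?_
  · nlinarith [exp_one_lt_d9]
  have hloglog : log (log k) ≤ 0.3841 * log k := by
    have := exp_one_mul_log_le (zero_le_one.trans hlogk)
    have := log_nonneg hlogk
    nlinarith [exp_one_gt_d9]
  rw [log_mul (by positivity) (by positivity)]
  nlinarith

theorem mul_log_le_of_log_firstPrimesProd_le (k : ℕ) {x : ℝ}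
    (hx : log (firstPrimesProd k) ≤ x) : k * log x ≤ 1.3841 * x := by
  rcases le_or_gt k 3 with hk | hk
  · exact mul_log_le_of_le_three hk
      ((log_nonneg (by exact_mod_cast firstPrimesProd_pos k)).trans hx)
  rcases le_or_gt 13 k with hk' | hk'
  · exact mul_log_le_of_thirteen_le hk' hx
  interval_cases k
  · exact mul_log_le_of_certificate 11 7 1 7 3 (by decide +kernel) hx
  · exact mul_log_le_of_certificate 13 11 1 3 1 (by decide +kernel) hx
  · exact mul_log_le_of_certificate 17 29 2 10 3 (by decide +kernel) hx
  · exact mul_log_le_of_certificate 19 94 5 26 7 (by decide +kernel) hx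
  · exact mul_log_le_of_certificate 23 116 5 289 72 (by decide +kernel) hx
  · exact mul_log_le_of_certificate 29 1137 41 145 34 (by decide +kernel) hx
  · exact mul_log_le_of_certificate 31 228 7 9 2 (by decide +kernel) hx
  · exact mul_log_le_of_certificate 37 75 2 33 7 (by decide +kernel) hx
  · exact mul_log_le_of_certificate 41 85 2 44 9 (by decide +kernel) hx

theorem stmt_5 (N : ℕ) (hN : 3 ≤ N) :
    (N.primeFactors.card : ℝ) ≤ 1.3841 * Real.log N / Real.log (Real.log N) := by
  have hN' : (3 : ℝ) ≤ N := by exact_mod_cast hN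
  have hlogN : 1 < log N := by
    rw [lt_log_iff_exp_lt (by linarith)]
    linarith [exp_one_lt_d9]
  rw [le_div_iff₀ (log_pos hlogN)]
  apply mul_log_le_of_log_firstPrimesProd_le
  exact log_le_log (by exact_mod_cast firstPrimesProd_pos _)
    (by exact_mod_cast firstPrimesProd_card_primeFactors_le (by omega))
end

section
/- For every integer k ≥ 1, the sum over a in {1,...,k} with gcd(a,k)=1 of gcd(a−1, k) equals φ(k)·d(k), where φ is Euler's totient function and d(k) is the number of divisors of k. -/
/-!
Write `gcd (a - 1) k = ∑ φ d` over the divisors `d ∣ k` with `d ∣ a - 1`, and exchange the two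
sums. For `d ∣ k`, the units `a` of `ZMod k` with `a ≡ 1 [MOD d]` form the kernel of the
surjective reduction `(ZMod k)ˣ →* (ZMod d)ˣ`, so there are `φ k / φ d` of them, and every
divisor `d` contributes exactly `φ k`.
-/
open Finset
open scoped Nat

theorem Nat.gcd_eq_sum_totient_filter_dvd (n : ℕ) {k : ℕ} (hk : k ≠ 0) :
    n.gcd k = ∑ d ∈ k.divisors with d ∣ n, φ d := by
  have : {d ∈ k.divisors | d ∣ n} = {d ∈ k.divisors | d ∣ n.gcd k} :=
    filter_congr fun d hd => by simp [Nat.dvd_gcd_iff, Nat.dvd_of_mem_divisors hd]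
  rw [this, divisors_filter_dvd_of_dvd hk (gcd_dvd_right n k), sum_totient]

theorem MonoidHom.card_ker_mul_card_of_surjective {G H : Type*} [Group G] [Group H]
    (f : G →* H) (hf : Function.Surjective f) :
    Nat.card f.ker * Nat.card H = Nat.card G := by
  rw [← Subgroup.card_mul_index f.ker, Subgroup.index_ker, f.range_eq_top.mpr hf,
    Subgroup.card_top]

theorem sum_units_coe_eq_sum_filter_isUnit {R M : Type*} [Monoid R] [Fintype R] [Fintype Rˣ]
    [DecidablePred (IsUnit : R → Prop)] [AddCommMonoid M] (f : R → M) :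
    ∑ u : Rˣ, f u = ∑ x with IsUnit x, f x := by
  have : univ.map ⟨Units.val, Units.val_injective⟩ = univ.filter (IsUnit : R → Prop) := by
    ext x
    simp [IsUnit, eq_comm]
  rw [← this, sum_map]
  rfl

namespace ZMod

variable {k : ℕ}

theorem sum_range_natCast {M : Type*} [AddCommMonoid M] [NeZero k] (f : ZMod k → M) :
    ∑ b ∈ range k, f b = ∑ x, f x := by
  obtain ⟨n, rfl⟩ := Nat.exists_eq_add_one_of_ne_zero (NeZero.ne k)
  rw [← Fin.sum_univ_eq_sum_range]
  exact Fintype.sum_congr _ _ fun i => congrArg f (Fin.cast_val_eq_self i)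

theorem sum_Icc_natCast {M : Type*} [AddCommMonoid M] [NeZero k] (f : ZMod k → M) :
    ∑ a ∈ Icc 1 k, f a = ∑ x, f x := by
  rw [← Ico_add_one_right_eq_Icc, ← zero_add 1, ← sum_Ico_add', ← range_eq_Ico]
  push_cast
  rw [sum_range_natCast (fun x => f (x + 1))]
  exact Equiv.sum_comp (Equiv.addRight (1 : ZMod k)) f

theorem dvd_val_iff_castHom_eq_zero {d : ℕ} [NeZero k] (hd : d ∣ k) (x : ZMod k) :
    d ∣ x.val ↔ castHom hd (ZMod d) x = 0 := by
  rw [← natCast_eq_zero_iff, natCast_val, castHom_apply]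

theorem mem_ker_unitsMap_iff {d : ℕ} [NeZero k] (hd : d ∣ k) (u : (ZMod k)ˣ) :
    u ∈ (unitsMap hd).ker ↔ d ∣ ((u : ZMod k) - 1).val := by
  rw [dvd_val_iff_castHom_eq_zero hd, map_sub, map_one, sub_eq_zero, MonoidHom.mem_ker,
    Units.ext_iff, unitsMap_val, Units.val_one, castHom_apply]

theorem totient_mul_card_ker_unitsMap {d : ℕ} [NeZero k] (hd : d ∣ k) :
    φ d * Nat.card (unitsMap hd).ker = φ k := by
  have : NeZero d := ⟨fun h => NeZero.ne k (Nat.eq_zero_of_zero_dvd (h ▸ hd))⟩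
  rw [← card_units_eq_totient, ← card_units_eq_totient, ← Nat.card_eq_fintype_card,
    ← Nat.card_eq_fintype_card, mul_comm,
    (unitsMap hd).card_ker_mul_card_of_surjective (unitsMap_surjective hd)]

theorem sum_Icc_coprime_gcd_sub_one_eq_sum_units [NeZero k] :
    ∑ a ∈ Icc 1 k with a.gcd k = 1, (a - 1).gcd k =
      ∑ u : (ZMod k)ˣ, ((u : ZMod k) - 1).val.gcd k := by
  rw [sum_units_coe_eq_sum_filter_isUnit fun x : ZMod k => (x - 1).val.gcd k, sum_filter,
    sum_filter, ← sum_Icc_natCast]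
  refine sum_congr rfl fun a ha => ?_
  have hgcd : ((a : ZMod k) - 1).val.gcd k = (a - 1).gcd k := by
    rw [← Nat.cast_one, ← Nat.cast_sub (mem_Icc.mp ha).1, val_natCast, ← Nat.gcd_rec,
      Nat.gcd_comm]
  simp only [isUnit_iff_coprime, Nat.coprime_iff_gcd_eq_one, hgcd]

theorem sum_units_gcd_val_sub_one [NeZero k] :
    ∑ u : (ZMod k)ˣ, ((u : ZMod k) - 1).val.gcd k = φ k * k.divisors.card := by
  calc ∑ u : (ZMod k)ˣ, ((u : ZMod k) - 1).val.gcd k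
      = ∑ u : (ZMod k)ˣ, ∑ d ∈ k.divisors with d ∣ ((u : ZMod k) - 1).val, φ d := by
        simp_rw [Nat.gcd_eq_sum_totient_filter_dvd _ (NeZero.ne k)]
    _ = ∑ d ∈ k.divisors, ∑ u ∈ {u : (ZMod k)ˣ | d ∣ ((u : ZMod k) - 1).val}, φ d :=
        sum_comm' fun _ _ => by simp only [mem_filter, mem_univ, true_and, and_comm]
    _ = ∑ d ∈ k.divisors, φ k := sum_congr rfl fun d hd => by
        have hdk := Nat.dvd_of_mem_divisors hd
        rw [sum_const, smul_eq_mul, mul_comm, ← totient_mul_card_ker_unitsMap hdk,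
          Nat.card_eq_fintype_card, Fintype.card_subtype]
        simp only [mem_ker_unitsMap_iff]
    _ = φ k * k.divisors.card := by rw [sum_const, smul_eq_mul, mul_comm]

end ZMod

theorem stmt_7_general (k : ℕ) :
    ∑ a ∈ (Finset.Icc 1 k).filter (fun a => Nat.gcd a k = 1), Nat.gcd (a - 1) k =
      Nat.totient k * k.divisors.card := by
  rcases k.eq_zero_or_pos with rfl | hk
  · simp
  have : NeZero k := ⟨hk.ne'⟩
  rw [ZMod.sum_Icc_coprime_gcd_sub_one_eq_sum_units, ZMod.sum_units_gcd_val_sub_one]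

theorem stmt_7 (k : ℕ) (hk : 1 ≤ k) :
    ∑ a ∈ (Finset.Icc 1 k).filter (fun a => Nat.gcd a k = 1), Nat.gcd (a - 1) k =
      Nat.totient k * k.divisors.card :=
  stmt_7_general k
end

section
/- Fix k ≥ 2. Let M be a positive integer divisible by every prime q with (q−1) | k, such that M − 1 is not prime, and let N = M^k. Then for every prime p < M, the number N − p^k has at least d(k) prime factors counted with multiplicity, where d(k) is the number of divisors of k. -/
/-!
Writing `Φ_d(a, b) = b ^ φ(d) Φ_d(a / b)` for the homogenized cyclotomic polynomials,
`a ^ n - b ^ n = ∏_{d ∣ n} Φ_d(a, b)`, and `Φ_d(a, b) ≥ (a - b) ^ φ(d)` for `0 < b < a`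
(every root of `Φ_d` lies on the unit circle). So once `a - b ≥ 2`, each of the `d(n)` factors
is at least `2` and contributes a prime factor. For `a = M`, `b = p < M` the only case with
`a - b < 2` is `p = M - 1`, which is excluded because `M - 1` is not prime.
-/

open Polynomial Finset
open scoped ArithmeticFunction.Omega

noncomputable def homogenizedCyclotomic (d : ℕ) (a b : ℤ) : ℤ :=
  ((cyclotomic d ℤ).scaleRoots b).eval a

theorem homogenizedCyclotomic_cast_real (d : ℕ) (a : ℤ) {b : ℤ} (hb : b ≠ 0) :
    (homogenizedCyclotomic d a b : ℝ) =
      (b : ℝ) ^ d.totient * (cyclotomic d ℝ).eval ((a : ℝ) / b) := by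
  have hb' : (b : ℝ) ≠ 0 := Int.cast_ne_zero.mpr hb
  have h := scaleRoots_eval₂_mul (p := cyclotomic d ℤ) (Int.castRingHom ℝ) ((a : ℝ) / b) b
  rw [eq_intCast, mul_div_cancel₀ _ hb', eval₂_at_intCast, eval₂_eq_eval_map, map_cyclotomic,
    natDegree_cyclotomic] at h
  simpa [homogenizedCyclotomic] using h

theorem prod_homogenizedCyclotomic (a : ℤ) {b : ℤ} (hb : b ≠ 0) {n : ℕ} (hn : 0 < n) :
    ∏ d ∈ n.divisors, homogenizedCyclotomic d a b = a ^ n - b ^ n := by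
  have hb' : (b : ℝ) ≠ 0 := Int.cast_ne_zero.mpr hb
  suffices ((∏ d ∈ n.divisors, homogenizedCyclotomic d a b : ℤ) : ℝ) = a ^ n - b ^ n by
    exact_mod_cast this
  push_cast
  simp only [homogenizedCyclotomic_cast_real _ _ hb, prod_mul_distrib, prod_pow_eq_pow_sum,
    Nat.sum_totient, ← eval_prod, prod_cyclotomic_eq_X_pow_sub_one hn, eval_sub, eval_pow, eval_X,
    eval_one, div_pow]
  field_simp

theorem sub_pow_totient_le_homogenizedCyclotomic (d : ℕ) {a b : ℤ} (hb : 0 < b) (hab : b < a) :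
    (a - b) ^ d.totient ≤ homogenizedCyclotomic d a b := by
  have hb' : (0 : ℝ) < b := by exact_mod_cast hb
  have hq : 1 < (a : ℝ) / b := (one_lt_div hb').mpr (by exact_mod_cast hab)
  suffices ((a - b : ℤ) : ℝ) ^ d.totient ≤ homogenizedCyclotomic d a b by exact_mod_cast this
  calc ((a - b : ℤ) : ℝ) ^ d.totient
        = (b : ℝ) ^ d.totient * ((a : ℝ) / b - 1) ^ d.totient := by
        rw [← mul_pow]; congr 1; push_cast; field_simp
    _ ≤ (b : ℝ) ^ d.totient * (cyclotomic d ℝ).eval ((a : ℝ) / b) := by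
        gcongr; exact sub_one_pow_totient_le_cyclotomic_eval hq d
    _ = homogenizedCyclotomic d a b := (homogenizedCyclotomic_cast_real d a hb.ne').symm

theorem le_cardFactors_prod {ι : Type*} (s : Finset ι) (f : ι → ℕ)
    (hf : ∀ i ∈ s, 2 ≤ f i) :
    s.card ≤ Ω (∏ i ∈ s, f i) := by
  induction s using Finset.cons_induction with
  | empty => simp
  | cons i s hi ih =>
    have hfi : 2 ≤ f i := hf i (mem_cons_self i s)
    have hfs : ∀ j ∈ s, 2 ≤ f j := fun j hj => hf j (mem_cons_of_mem hj)
    have hprod : ∏ j ∈ s, f j ≠ 0 := prod_ne_zero_iff.mpr fun j hj => by linarith [hfs j hj]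
    have hpos : 0 < Ω (f i) := ArithmeticFunction.cardFactors_pos_iff_one_lt.mpr hfi
    rw [prod_cons, card_cons, ArithmeticFunction.cardFactors_mul (by omega) hprod]
    linarith [ih hfs]

theorem card_divisors_le_cardFactors_pow_sub_pow (n : ℕ) {a b : ℕ} (hb : 0 < b)
    (hab : b + 2 ≤ a) : n.divisors.card ≤ Ω (a ^ n - b ^ n) := by
  rcases n.eq_zero_or_pos with rfl | hn
  · simp
  have two_le : ∀ d ∈ n.divisors, 2 ≤ homogenizedCyclotomic d a b := fun d hd =>
    calc (2 : ℤ) ≤ a - b := by omega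
      _ ≤ (a - b) ^ d.totient :=
        le_self_pow₀ (by omega) (Nat.totient_pos.mpr (Nat.pos_of_mem_divisors hd)).ne'
      _ ≤ homogenizedCyclotomic d a b :=
        sub_pow_totient_le_homogenizedCyclotomic d (by omega) (by omega)
  have factor : a ^ n - b ^ n = ∏ d ∈ n.divisors, (homogenizedCyclotomic d a b).toNat := by
    zify [Nat.pow_le_pow_left (by omega : b ≤ a) n]
    rw [prod_congr rfl fun d hd => Int.toNat_of_nonneg (by linarith [two_le d hd]),
      prod_homogenizedCyclotomic _ (by omega) hn]
  rw [factor]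
  exact le_cardFactors_prod _ _ fun d hd => by have := two_le d hd; omega

theorem stmt_9_general (k M : ℕ) (hM1 : ¬ Nat.Prime (M - 1)) :
    ∀ p : ℕ, p.Prime → p < M →
      k.divisors.card ≤ (M ^ k - p ^ k).primeFactorsList.length := by
  intro p hp hpM
  have hpM1 : p ≠ M - 1 := fun h => hM1 (h ▸ hp)
  rw [← ArithmeticFunction.cardFactors_apply]
  exact card_divisors_le_cardFactors_pow_sub_pow k hp.pos (by omega)

theorem stmt_9 (k M : ℕ) (hk : 2 ≤ k) (hMpos : 0 < M)
    (hM : ∀ q : ℕ, q.Prime → (q - 1) ∣ k → q ∣ M) (hM1 : ¬ Nat.Prime (M - 1)) :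
    ∀ p : ℕ, p.Prime → p < M →
      k.divisors.card ≤ (M ^ k - p ^ k).primeFactorsList.length :=
  stmt_9_general k M hM1
end

section
/- Let k ≥ 1, q a prime with (q−1) | k, and let n be the largest integer such that x^k ≡ 1 (mod q^n) holds for all x coprime to q. Then for each b with 0 ≤ b < q, the congruence x^k ≡ 1 + b·q^n (mod q^(n+1)) has exactly q^(n−1)(q−1) solutions x mod q^(n+1) with gcd(x,q)=1. -/
/-!
The `k`-th power map on `(ZMod q^(n+1))ˣ` lands in the kernel `K` of reduction modulo `q^n`,
a group of prime order `q`, and it is not trivial by the maximality of `n`; so its image is all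
of `K`. Each `1 + b q^n` lies in `K`, hence its fibre is a coset of the kernel of the power map,
of size `φ(q^(n+1)) / q = q^(n-1) (q - 1)`.
-/

open Finset

theorem Subgroup.eq_of_le_of_ne_bot_of_prime_card {G : Type*} [Group G] {H K : Subgroup G}
    (hle : H ≤ K) (hH : H ≠ ⊥) (hK : (Nat.card K).Prime) : H = K := by
  have : Finite K := Nat.finite_of_card_ne_zero hK.ne_zero
  rcases (Nat.dvd_prime hK).1 (Subgroup.card_dvd_of_le hle) with h | h
  · exact absurd (Subgroup.eq_bot_of_card_eq H h) hH
  · exact Subgroup.eq_of_le_of_card_ge hle h.ge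

namespace MonoidHom

variable {G H : Type*} [Group G] [Group H] (f : G →* H)

theorem card_ker_mul_card_range : Nat.card f.ker * Nat.card f.range = Nat.card G :=
  Subgroup.index_ker f ▸ f.ker.card_mul_index

theorem card_filter_eq_of_mem_range [Fintype G] [DecidableEq H] {c : H} (hc : c ∈ f.range) :
    #{g | f g = c} = Nat.card f.ker := by
  obtain ⟨v, rfl⟩ := hc
  rw [← Nat.card_congr (f.fiberEquivKer v), ← Fintype.card_subtype, Fintype.card_eq_nat_card]
  rfl

end MonoidHom

namespace ZMod

theorem unitOfCoprime_val_val {n : ℕ} [NeZero n] (u : (ZMod n)ˣ) :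
    unitOfCoprime (u : ZMod n).val (val_coe_unit_coprime u) = u := by
  ext
  simp [coe_unitOfCoprime]

theorem unitOfCoprime_pow {n x : ℕ} (hx : x.Coprime n) (k : ℕ) :
    unitOfCoprime x hx ^ k = unitOfCoprime (x ^ k) (hx.pow_left k) := by
  ext
  simp [coe_unitOfCoprime]

theorem unitOfCoprime_mem_ker_unitsMap_iff {m n : ℕ} (h : m ∣ n) {x : ℕ} (hx : x.Coprime n) :
    unitOfCoprime x hx ∈ (unitsMap h).ker ↔ x ≡ 1 [MOD m] := by
  rw [MonoidHom.mem_ker, Units.ext_iff, unitsMap_val, coe_unitOfCoprime, cast_natCast h,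
    Units.val_one, ← Nat.cast_one, natCast_eq_natCast_iff]

theorem range_powMonoidHom_le_ker_unitsMap_iff {m n : ℕ} [NeZero n] (h : m ∣ n) (k : ℕ) :
    (powMonoidHom k : (ZMod n)ˣ →* (ZMod n)ˣ).range ≤ (unitsMap h).ker ↔
      ∀ x : ℕ, x.Coprime n → x ^ k ≡ 1 [MOD m] := by
  constructor
  · intro hle x hx
    rw [← unitOfCoprime_mem_ker_unitsMap_iff h (hx.pow_left k), ← unitOfCoprime_pow hx]
    exact hle ⟨_, rfl⟩
  · rintro hall _ ⟨u, rfl⟩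
    rw [← unitOfCoprime_val_val u, powMonoidHom_apply, unitOfCoprime_pow,
      unitOfCoprime_mem_ker_unitsMap_iff]
    exact hall _ (val_coe_unit_coprime u)

theorem range_powMonoidHom_eq_bot_iff {n : ℕ} [NeZero n] (k : ℕ) :
    (powMonoidHom k : (ZMod n)ˣ →* (ZMod n)ˣ).range = ⊥ ↔
      ∀ x : ℕ, x.Coprime n → x ^ k ≡ 1 [MOD n] := by
  rw [← le_bot_iff, ← MonoidHom.ker_id, ← unitsMap_self, range_powMonoidHom_le_ker_unitsMap_iff]

theorem card_ker_unitsMap_prime_pow {p n : ℕ} (hp : p.Prime) (hn : n ≠ 0) :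
    Nat.card (unitsMap (pow_dvd_pow p (n.le_add_right 1))).ker = p := by
  have : NeZero p := ⟨hp.ne_zero⟩
  have htot : (p ^ (n + 1)).totient = p * (p ^ n).totient := by
    rw [pow_succ', Nat.totient_mul_of_prime_of_dvd hp (dvd_pow_self p hn)]
  have hsurj := (unitsMap (pow_dvd_pow p (n.le_add_right 1))).card_ker_mul_card_range
  rw [MonoidHom.range_eq_top_of_surjective _ (unitsMap_surjective _), Subgroup.card_top,
    Nat.card_eq_fintype_card (α := (ZMod (p ^ n))ˣ),
    Nat.card_eq_fintype_card (α := (ZMod (p ^ (n + 1)))ˣ), card_units_eq_totient, card_units_eq_totient, htot] at hsurj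
  exact Nat.eq_of_mul_eq_mul_right (Nat.totient_pos.2 (pow_pos hp.pos n)) hsurj

theorem card_filter_range_coprime_pow_modEq {n : ℕ} [NeZero n] (k : ℕ) {c : ℕ}
    (hc : c.Coprime n) :
    #{x ∈ range n | x.Coprime n ∧ x ^ k ≡ c [MOD n]} =
      #{u : (ZMod n)ˣ | u ^ k = unitOfCoprime c hc} := by
  symm
  apply card_nbij (fun u : (ZMod n)ˣ => (u : ZMod n).val)
  · intro u hu
    simp only [coe_filter, mem_univ, true_and, mem_range] at hu ⊢
    refine ⟨val_lt _, val_coe_unit_coprime u, ?_⟩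
    rw [← natCast_eq_natCast_iff, Nat.cast_pow, natCast_val, cast_id', id,
      ← coe_unitOfCoprime c hc, ← hu]
    rfl
  · intro u _ v _ huv
    exact Units.ext (val_injective n huv)
  · intro x hx
    simp only [coe_filter, mem_range] at hx
    obtain ⟨hxn, hx, hxk⟩ := hx
    refine ⟨unitOfCoprime x hx, ?_, by simp [coe_unitOfCoprime, val_cast_of_lt hxn]⟩
    simp only [mem_coe, mem_filter, mem_univ, true_and]
    rw [unitOfCoprime_pow]
    ext
    simpa [coe_unitOfCoprime] using (natCast_eq_natCast_iff _ _ _).2 hxk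

end ZMod

theorem stmt_14_general (k q n : ℕ) (hq : q.Prime) (hn : 1 ≤ n)
    (hall : ∀ x : ℕ, Nat.Coprime x q → x ^ k ≡ 1 [MOD q ^ n])
    (hmax : ¬ ∀ x : ℕ, Nat.Coprime x q → x ^ k ≡ 1 [MOD q ^ (n + 1)]) :
    ∀ b : ℕ, b < q →
      ((Finset.range (q ^ (n + 1))).filter
          (fun x => Nat.Coprime x q ∧ x ^ k ≡ 1 + b * q ^ n [MOD q ^ (n + 1)])).card =
        q ^ (n - 1) * (q - 1) := by
  intro b _
  have : NeZero q := ⟨hq.ne_zero⟩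
  have hn0 : n ≠ 0 := by omega
  have hcop {x : ℕ} : x.Coprime q ↔ x.Coprime (q ^ (n + 1)) :=
    (Nat.coprime_pow_right_iff n.succ_pos x q).symm
  let f : (ZMod (q ^ (n + 1)))ˣ →* (ZMod (q ^ (n + 1)))ˣ := powMonoidHom k
  have hd : q ^ n ∣ q ^ (n + 1) := pow_dvd_pow q (n.le_add_right 1)
  have hK : Nat.card (ZMod.unitsMap hd).ker = q := ZMod.card_ker_unitsMap_prime_pow hq hn0
  have hrange : f.range = (ZMod.unitsMap hd).ker :=
    Subgroup.eq_of_le_of_ne_bot_of_prime_card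
      ((ZMod.range_powMonoidHom_le_ker_unitsMap_iff hd k).2 fun x hx => hall x (hcop.2 hx))
      (fun h => hmax fun x hx => (ZMod.range_powMonoidHom_eq_bot_iff k).1 h x (hcop.1 hx))
      (by rwa [hK])
  have h1 : 1 + b * q ^ n ≡ 1 [MOD q ^ n] := Nat.add_mul_mod_self_right 1 b (q ^ n)
  have hc : (1 + b * q ^ n).Coprime (q ^ (n + 1)) :=
    hcop.1 ((h1.of_dvd (dvd_pow_self q hn0)).gcd_eq.trans (Nat.gcd_one_left q))
  have hcK : ZMod.unitOfCoprime _ hc ∈ f.range := by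
    rwa [hrange, ZMod.unitOfCoprime_mem_ker_unitsMap_iff]
  have hker : Nat.card f.ker * q = q ^ (n - 1) * (q - 1) * q := by
    have := f.card_ker_mul_card_range
    rw [hrange, hK, Nat.card_eq_fintype_card (α := (ZMod _)ˣ), ZMod.card_units_eq_totient,
      Nat.totient_prime_pow_succ hq] at this
    rwa [mul_right_comm, ← pow_succ, Nat.sub_add_cancel hn]
  rw [Finset.filter_congr fun x _ => by rw [hcop], ZMod.card_filter_range_coprime_pow_modEq k hc]
  exact (f.card_filter_eq_of_mem_range hcK).trans (Nat.eq_of_mul_eq_mul_right hq.pos hker)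

theorem stmt_14 (k q n : ℕ) (hk : 1 ≤ k) (hq : q.Prime) (hqk : (q - 1) ∣ k) (hn : 1 ≤ n)
    (hall : ∀ x : ℕ, Nat.Coprime x q → x ^ k ≡ 1 [MOD q ^ n])
    (hmax : ¬ ∀ x : ℕ, Nat.Coprime x q → x ^ k ≡ 1 [MOD q ^ (n + 1)]) :
    ∀ b : ℕ, b < q →
      ((Finset.range (q ^ (n + 1))).filter
          (fun x => Nat.Coprime x q ∧ x ^ k ≡ 1 + b * q ^ n [MOD q ^ (n + 1)])).card =
        q ^ (n - 1) * (q - 1) :=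
  stmt_14_general k q n hq hn hall hmax
end

section
/- For every ε > 0 and integer k ≥ 3, the number of solutions (a, b) in coprime positive integers to N = a^k + b^k is O_{k,ε}(N^ε) as N → ∞; more precisely there is a constant C(k) such that the number of coprime solutions is at most C(k)^(1 + ω(N)), where ω(N) is the number of distinct prime factors of N. -/
/-!
A coprime solution `(a, b)` of `a ^ k + b ^ k = N` gives the residue `a / b`, a root of
`r ^ k = -1` modulo `N`, and `(a, b)` can be recovered from it: `a₁ b₂ ≡ a₂ b₁ (mod N)` with both
sides below `N` forces `a₁ b₂ = a₂ b₁`. By the Chinese remainder theorem the number of such roots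
is multiplicative in `N`. Modulo `p ^ e` they form a coset of the `k`-th roots of unity, and since
`(ZMod (p ^ e))ˣ` has a cyclic subgroup of index at most `2` there are at most `2 k` of them.
So there are at most `(2 k) ^ ω(N)` solutions, and `(2 k) ^ ω(N) = O(N ^ ε)` because `N` has few
prime factors above any fixed threshold.
-/

theorem Subgroup.card_le_index_mul_of_forall_pow_eq_one {G : Type*} [Group G] [Finite G]
    (H R : Subgroup G) [IsCyclic H] {k : ℕ} (hk : k ≠ 0) (hR : ∀ x ∈ R, x ^ k = 1) :
    Nat.card R ≤ H.index * k := by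
  have : IsCyclic ↥(R ⊓ H) := Subgroup.isCyclic_of_le inf_le_right
  have hcard : Nat.card ↥(R ⊓ H) ≤ k := by
    rw [← IsCyclic.exponent_eq_card]
    refine Nat.le_of_dvd (Nat.pos_of_ne_zero hk) (Monoid.exponent_dvd_of_forall_pow_eq_one ?_)
    rintro ⟨x, hx, -⟩
    exact Subtype.ext (hR x hx)
  have hindex : H.relIndex R ≤ H.index := by
    rw [← relIndex_top_right]
    exact relIndex_le_of_le_right le_top
      (by rw [relIndex_top_right]; exact index_ne_zero_of_finite)
  calc Nat.card R = Nat.card ↥(R ⊓ H) * H.relIndex R := by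
        rw [← relIndex_bot_left, ← relIndex_mul_relIndex _ _ _ bot_le inf_le_left,
          relIndex_bot_left, inf_relIndex_left]
    _ ≤ k * H.index := Nat.mul_le_mul hcard hindex
    _ = H.index * k := mul_comm _ _

theorem card_pow_eq_le_card_rootsOfUnity {M : Type*} [CommMonoid M] [Finite M] {a : M}
    (ha : IsUnit a) {k : ℕ} (hk : k ≠ 0) :
    Nat.card {x : M // x ^ k = a} ≤ Nat.card (rootsOfUnity k M) := by
  rcases isEmpty_or_nonempty {x : M // x ^ k = a} with h | ⟨x₀, hx₀⟩
  · simp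
  have isUnit_of_pow_eq {x : M} (hx : x ^ k = a) : IsUnit x := (isUnit_pow_iff hk).mp (hx ▸ ha)
  set u₀ := (isUnit_of_pow_eq hx₀).unit
  refine Nat.card_le_card_of_injective
    (fun x ↦ ⟨(isUnit_of_pow_eq x.2).unit * u₀⁻¹, ?_⟩) fun x y hxy ↦ ?_
  · rw [mem_rootsOfUnity, mul_pow, inv_pow, mul_inv_eq_one, Units.ext_iff]
    simp [u₀, x.2, hx₀]
  · exact Subtype.ext (by simpa [Units.ext_iff] using hxy)

theorem ZMod.exists_isCyclic_subgroup_units_index_le_two {p : ℕ} (hp : p.Prime) (e : ℕ) :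
    ∃ H : Subgroup (ZMod (p ^ e))ˣ, IsCyclic H ∧ H.index ≤ 2 := by
  by_cases hcyc : IsCyclic (ZMod (p ^ e))ˣ
  · exact ⟨⊤, inferInstance, by simp⟩
  obtain rfl : p = 2 := by
    by_contra hp2
    exact hcyc (isCyclic_units_of_prime_pow p hp hp2 e)
  obtain ⟨n, rfl⟩ : ∃ n, e = n + 3 := ⟨e - 3, by
    have := (isCyclic_units_two_pow_iff e).not.mp hcyc; omega⟩
  -- `5` has order `2 ^ (n + 1)` in a group of order `2 ^ (n + 2)`.
  let five : (ZMod (2 ^ (n + 3)))ˣ := unitOfCoprime 5 (Nat.Coprime.pow_right _ (by norm_num))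
  refine ⟨Subgroup.zpowers five, inferInstance, le_of_eq ?_⟩
  have hcard := (Subgroup.zpowers five).index_mul_card
  rw [Nat.card_zpowers, ← orderOf_units, coe_unitOfCoprime, Nat.card_eq_fintype_card,
    card_units_eq_totient, Nat.totient_prime_pow Nat.prime_two (by omega)] at hcard
  have h5 : orderOf (5 : ZMod (2 ^ (n + 3))) = 2 ^ (n + 1) := orderOf_five (n + 1)
  rw [Nat.cast_ofNat, h5, show 2 ^ (n + 3 - 1) * (2 - 1) = 2 * 2 ^ (n + 1) by
    rw [show n + 3 - 1 = n + 1 + 1 by omega, pow_succ]; ring] at hcard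
  exact Nat.eq_of_mul_eq_mul_right (by positivity) hcard

theorem ZMod.card_pow_eq_neg_one_prime_pow_le {p : ℕ} (hp : p.Prime) (e : ℕ) {k : ℕ}
    (hk : k ≠ 0) : Nat.card {r : ZMod (p ^ e) // r ^ k = -1} ≤ 2 * k := by
  have : NeZero (p ^ e) := ⟨pow_ne_zero e hp.ne_zero⟩
  obtain ⟨H, hH, hindex⟩ := exists_isCyclic_subgroup_units_index_le_two hp e
  calc Nat.card {r : ZMod (p ^ e) // r ^ k = -1}
      ≤ Nat.card (rootsOfUnity k (ZMod (p ^ e))) :=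
        card_pow_eq_le_card_rootsOfUnity isUnit_one.neg hk
    _ ≤ H.index * k := H.card_le_index_mul_of_forall_pow_eq_one _ hk fun _ ↦ id
    _ ≤ 2 * k := Nat.mul_le_mul_right k hindex

theorem ZMod.card_pow_eq_neg_one_mul {a b : ℕ} (hab : a.Coprime b) (k : ℕ) :
    Nat.card {r : ZMod (a * b) // r ^ k = -1} =
      Nat.card {r : ZMod a // r ^ k = -1} * Nat.card {r : ZMod b // r ^ k = -1} := by
  let e := chineseRemainder hab
  have he (r : ZMod (a * b)) : e r ^ k = -1 ↔ r ^ k = -1 := by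
    rw [← map_pow, ← map_one e, ← map_neg, e.injective.eq_iff]
  rw [← Nat.card_prod, Nat.card_congr ((e.toEquiv.subtypeEquiv fun r ↦ (he r).symm).trans
    ((Equiv.subtypeEquivRight fun x : ZMod a × ZMod b ↦
      Prod.ext_iff (x := x ^ k) (y := -1)).trans
      (Equiv.subtypeProdEquivProd (p := fun r : ZMod a ↦ r ^ k = -1)
        (q := fun r : ZMod b ↦ r ^ k = -1))))]

theorem ZMod.card_pow_eq_neg_one_le {n : ℕ} (hn : n ≠ 0) {k : ℕ} (hk : k ≠ 0) :
    Nat.card {r : ZMod n // r ^ k = -1} ≤ (2 * k) ^ n.primeFactors.card := by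
  induction n using Nat.recOnPosPrimePosCoprime with
  | zero => exact absurd rfl hn
  | one => simpa using Finite.card_subtype_le (α := ZMod 1) fun r ↦ r ^ k = -1
  | prime_pow p e hp he =>
    rw [Nat.primeFactors_prime_pow he.ne' hp, Finset.card_singleton, pow_one]
    exact card_pow_eq_neg_one_prime_pow_le hp e hk
  | coprime a b ha hb hab iha ihb =>
    rw [card_pow_eq_neg_one_mul hab, hab.primeFactors_mul,
      Finset.card_union_of_disjoint hab.disjoint_primeFactors, pow_add]
    exact Nat.mul_le_mul (iha (by omega)) (ihb (by omega))

theorem Nat.mul_lt_of_pow_lt {a b N k : ℕ} (hk : 2 ≤ k) (ha : a ^ k < N) (hb : b ^ k < N) :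
    a * b < N := by
  refine lt_of_pow_lt_pow_left₀ k (Nat.zero_le N) ?_
  calc (a * b) ^ k = a ^ k * b ^ k := mul_pow a b k
    _ < N ^ 2 := by rw [sq]; exact Nat.mul_lt_mul'' ha hb
    _ ≤ N ^ k := Nat.pow_le_pow_right (by omega) hk

theorem Nat.Coprime.eq_of_mul_eq_mul {a₁ b₁ a₂ b₂ : ℕ} (h₁ : a₁.Coprime b₁) (h₂ : a₂.Coprime b₂)
    (ha₁ : 0 < a₁) (h : a₁ * b₂ = a₂ * b₁) : a₁ = a₂ ∧ b₁ = b₂ := by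
  have ha : a₁ = a₂ := Nat.dvd_antisymm (h₁.dvd_of_dvd_mul_right ⟨b₂, h.symm⟩)
    (h₂.dvd_of_dvd_mul_right ⟨b₁, h⟩)
  subst ha
  exact ⟨rfl, (Nat.eq_of_mul_eq_mul_left ha₁ h).symm⟩

theorem card_coprime_pow_add_pow_eq_le {k : ℕ} (hk : 2 ≤ k) {N : ℕ} (hN : N ≠ 0) :
    Nat.card {ab : ℕ × ℕ // 0 < ab.1 ∧ 0 < ab.2 ∧ Nat.Coprime ab.1 ab.2 ∧
      ab.1 ^ k + ab.2 ^ k = N} ≤ Nat.card {r : ZMod N // r ^ k = -1} := by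
  have : NeZero N := ⟨hN⟩
  have inv_right {a b : ℕ} (hab : a.Coprime b) (hsum : a ^ k + b ^ k = N) :
      (b : ZMod N) * (b : ZMod N)⁻¹ = 1 := by
    refine ZMod.coe_mul_inv_eq_one b ?_
    rw [← hsum, ← pow_sub_one_mul (a := b) (by omega : k ≠ 0), Nat.coprime_add_mul_right_right]
    exact hab.symm.pow_right k
  have sum_eq_zero {a b : ℕ} (hsum : a ^ k + b ^ k = N) :
      (a : ZMod N) ^ k + (b : ZMod N) ^ k = 0 := by
    have := congrArg (Nat.cast : ℕ → ZMod N) hsum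
    rwa [ZMod.natCast_self, Nat.cast_add, Nat.cast_pow, Nat.cast_pow] at this
  have pow_lt {a b : ℕ} (hb : 0 < b) (hsum : a ^ k + b ^ k = N) : a ^ k < N := by
    have := Nat.pow_pos (n := k) hb
    omega
  refine Nat.card_le_card_of_injective
    (fun ab ↦ ⟨(ab.1.1 : ZMod N) * (ab.1.2 : ZMod N)⁻¹, ?_⟩) ?_
  · obtain ⟨⟨a, b⟩, -, -, hab, hsum⟩ := ab
    have hb : (b : ZMod N) ^ k * ((b : ZMod N)⁻¹) ^ k = 1 := by
      rw [← mul_pow, inv_right hab hsum, one_pow]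
    linear_combination ((b : ZMod N)⁻¹) ^ k * sum_eq_zero hsum - hb
  · rintro ⟨⟨a₁, b₁⟩, ha₁, hb₁, hab₁, hsum₁⟩ ⟨⟨a₂, b₂⟩, ha₂, hb₂, hab₂, hsum₂⟩ h
    simp only [Subtype.mk.injEq] at h
    have hcross : ((a₁ * b₂ : ℕ) : ZMod N) = ((a₂ * b₁ : ℕ) : ZMod N) := by
      push_cast
      linear_combination ((b₁ : ZMod N) * b₂) * h - (a₁ * b₂ : ZMod N) * inv_right hab₁ hsum₁
        + (a₂ * b₁ : ZMod N) * inv_right hab₂ hsum₂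
    have hmul : a₁ * b₂ = a₂ * b₁ :=
      ((ZMod.natCast_eq_natCast_iff _ _ _).mp hcross).eq_of_lt_of_lt
      (Nat.mul_lt_of_pow_lt hk (pow_lt hb₁ hsum₁) (pow_lt ha₂ (add_comm (a₂ ^ k) _ ▸ hsum₂)))
      (Nat.mul_lt_of_pow_lt hk (pow_lt hb₂ hsum₂) (pow_lt ha₁ (add_comm (a₁ ^ k) _ ▸ hsum₁)))
    obtain ⟨rfl, rfl⟩ := hab₁.eq_of_mul_eq_mul hab₂ ha₁ hmul
    rfl

theorem Nat.card_primeFactors_filter_le_le (N B : ℕ) :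
    (N.primeFactors.filter (· ≤ B)).card ≤ B + 1 := by
  simpa using Finset.card_le_card (s := N.primeFactors.filter (· ≤ B)) (t := Finset.Iic B)
    fun p hp ↦ Finset.mem_Iic.mpr (Finset.mem_filter.mp hp).2

theorem Nat.pow_card_primeFactors_filter_lt_le {N : ℕ} (hN : N ≠ 0) (B : ℕ) :
    B ^ (N.primeFactors.filter (B < ·)).card ≤ N :=
  calc B ^ (N.primeFactors.filter (B < ·)).card
      ≤ ∏ p ∈ N.primeFactors.filter (B < ·), p :=
        Finset.pow_card_le_prod _ _ _ fun _ hp ↦ (Finset.mem_filter.mp hp).2.le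
    _ ≤ ∏ p ∈ N.primeFactors, p :=
        Finset.prod_le_prod_of_subset_of_one_le' (Finset.filter_subset _ _)
          fun _ hp _ ↦ (Nat.prime_of_mem_primeFactors hp).one_le
    _ ≤ N := Nat.le_of_dvd (Nat.pos_of_ne_zero hN) (Nat.prod_primeFactors_dvd N)

theorem Nat.exists_pow_card_primeFactors_le_mul_rpow (C : ℕ) {ε : ℝ} (hε : 0 < ε) :
    ∃ C' : ℝ, ∀ N : ℕ, N ≠ 0 → (C : ℝ) ^ N.primeFactors.card ≤ C' * (N : ℝ) ^ ε := by
  rcases Nat.eq_zero_or_pos C with rfl | hC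
  · refine ⟨1, fun N hN ↦ ?_⟩
    rw [Nat.cast_zero, one_mul]
    exact (pow_le_one₀ le_rfl zero_le_one).trans
      (Real.one_le_rpow (x := N) (by exact_mod_cast Nat.one_le_iff_ne_zero.mpr hN) hε.le)
  -- Primes above `B = C ^ n` with `n ε ≥ 1` contribute at most `N ^ ε`, the others at most `B + 1`.
  set n := ⌈1 / ε⌉₊
  have hnε : 1 ≤ n * ε := by
    have := Nat.le_ceil (1 / ε)
    rwa [div_le_iff₀ hε] at this
  refine ⟨(C : ℝ) ^ (C ^ n + 1), fun N hN ↦ ?_⟩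
  set small := (N.primeFactors.filter (· ≤ C ^ n)).card
  set large := (N.primeFactors.filter (C ^ n < ·)).card
  have hsplit : N.primeFactors.card = small + large := by
    simp only [small, large, ← not_le]
    exact (Finset.card_filter_add_card_filter_not _).symm
  have hC1 : (1 : ℝ) ≤ C := by exact_mod_cast hC
  have hlarge : (C : ℝ) ^ large ≤ (N : ℝ) ^ ε := by
    have hN' : ((C : ℝ) ^ large) ^ n ≤ N := by
      rw [← pow_mul, mul_comm, pow_mul]
      exact_mod_cast Nat.pow_card_primeFactors_filter_lt_le hN (C ^ n)
    calc (C : ℝ) ^ large ≤ ((C : ℝ) ^ large) ^ ((n : ℝ) * ε) :=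
          Real.self_le_rpow_of_one_le (one_le_pow₀ hC1) hnε
      _ = (((C : ℝ) ^ large) ^ n) ^ ε := by rw [Real.rpow_mul (by positivity), Real.rpow_natCast]
      _ ≤ (N : ℝ) ^ ε := Real.rpow_le_rpow (by positivity) hN' hε.le
  calc (C : ℝ) ^ N.primeFactors.card = (C : ℝ) ^ small * (C : ℝ) ^ large := by
        rw [hsplit, pow_add]
    _ ≤ (C : ℝ) ^ (C ^ n + 1) * (N : ℝ) ^ ε := by
        gcongr
        exact Nat.card_primeFactors_filter_le_le N (C ^ n)

theorem stmt_15 (k : ℕ) (hk : 3 ≤ k) :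
    (∃ C : ℕ, ∀ N : ℕ, 1 ≤ N →
      Nat.card {ab : ℕ × ℕ // 0 < ab.1 ∧ 0 < ab.2 ∧ Nat.Coprime ab.1 ab.2 ∧
        ab.1 ^ k + ab.2 ^ k = N} ≤ C ^ (1 + N.primeFactors.card)) ∧
    ∀ ε : ℝ, 0 < ε → ∃ C' : ℝ, ∀ N : ℕ, 1 ≤ N →
      (Nat.card {ab : ℕ × ℕ // 0 < ab.1 ∧ 0 < ab.2 ∧ Nat.Coprime ab.1 ab.2 ∧
        ab.1 ^ k + ab.2 ^ k = N} : ℝ) ≤ C' * (N : ℝ) ^ ε := by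
  have hcount (N : ℕ) (hN : 1 ≤ N) :
      Nat.card {ab : ℕ × ℕ // 0 < ab.1 ∧ 0 < ab.2 ∧ Nat.Coprime ab.1 ab.2 ∧
        ab.1 ^ k + ab.2 ^ k = N} ≤ (2 * k) ^ N.primeFactors.card :=
    (card_coprime_pow_add_pow_eq_le (by omega) (by omega)).trans
      (ZMod.card_pow_eq_neg_one_le (by omega) (by omega))
  refine ⟨⟨2 * k, fun N hN ↦ (hcount N hN).trans (Nat.pow_le_pow_right (by omega) (by omega))⟩,
    fun ε hε ↦ ?_⟩
  obtain ⟨C', hC'⟩ := Nat.exists_pow_card_primeFactors_le_mul_rpow (2 * k) hε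
  exact ⟨C', fun N hN ↦ (by exact_mod_cast hcount N hN : _ ≤ ((2 * k : ℕ) : ℝ) ^ _).trans
    (hC' N (by omega))⟩
end
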